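/- Let K be an algebraically closed field of characteristic p ≥ 0, let g ≥ 1 and s ≥ 0 be integers, and let μ_1,…,μ_s be integers with each μ_j ≥ 2. Let Γ be the group with presentation ⟨x_1,…,x_g, y_1,…,y_g, γ_1,…,γ_s | (∏_{i=1}^{g}[x_i,y_i])·γ_1⋯γ_s = 1, γ_j^{μ_j} = 1 for 1 ≤ j ≤ s⟩. Let ρ : Γ → K^× be a group homomorphism that is not the trivial character, set λ_j = ρ(γ_j), and let ℓ be the number of indices j with λ_j = 1 and p ∤ μ_j. Then dim_K H^1(Γ, K_ρ) = 2g + s − 2 − ℓ. -/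

import Mathlib

open scoped commutatorElement

/-- Relations presenting the orbifold group of a closed genus-`g` surface with `s`
marked points of multiplicities `μ_j`: the surface relation
`(∏ i, [x_i, y_i]) · γ_1 ⋯ γ_s = 1` together with `γ_j ^ μ_j = 1` for all `j`.
The generator `Sum.inl (Sum.inl i)` is `x_i`, `Sum.inl (Sum.inr i)` is `y_i`, and
`Sum.inr j` is `γ_j`. -/
def surfRels (g s : ℕ) (μ : Fin s → ℕ) : Set (FreeGroup ((Fin g ⊕ Fin g) ⊕ Fin s)) :=
  (Set.range fun j : Fin s => FreeGroup.of (Sum.inr j) ^ μ j) ∪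
    {(List.ofFn fun i : Fin g =>
        ⁅FreeGroup.of (Sum.inl (Sum.inl i) : (Fin g ⊕ Fin g) ⊕ Fin s),
          FreeGroup.of (Sum.inl (Sum.inr i) : (Fin g ⊕ Fin g) ⊕ Fin s)⁆).prod *
      (List.ofFn fun j : Fin s => FreeGroup.of (Sum.inr j : (Fin g ⊕ Fin g) ⊕ Fin s)).prod}

/-- The orbifold group
`Γ = ⟨x_1,…,x_g, y_1,…,y_g, γ_1,…,γ_s ∣ (∏ i [x_i,y_i])·γ_1⋯γ_s = 1, γ_j^{μ_j} = 1⟩`. -/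
abbrev SurfOrbGroup (g s : ℕ) (μ : Fin s → ℕ) : Type := PresentedGroup (surfRels g s μ)

/-- The generator `γ_j` of `Γ`. -/
def surfGamma (g s : ℕ) (μ : Fin s → ℕ) (j : Fin s) : SurfOrbGroup g s μ :=
  PresentedGroup.of (Sum.inr j)

/-- The one-dimensional representation `K_ρ` attached to a character `ρ : G → Kˣ`:
`g ∈ G` acts on `K` by multiplication by `ρ g`. -/
def charRep {K : Type} [CommRing K] {G : Type} [Group G] (ρ : G →* Kˣ) :
    Representation K G K where
  toFun g := (ρ g : K) • (1 : K →ₗ[K] K)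
  map_one' := by simp
  map_mul' g h := by
    ext
    simp [mul_smul, mul_comm]

/-!
A cocycle `f ∈ Z¹(Γ, K_ρ)` is the same as a lift `γ ↦ (f γ, ρ γ)` of `ρ` to the affine group
`K ⋊ Kˣ`. For a presented group such lifts are determined by their values `v` on the generators,
subject to the Fox-linearized relations. The relation `γ_j ^ μ_j` linearizes to
`(1 + λ_j + ⋯ + λ_j ^ (μ_j - 1)) v_{γ_j} = 0`; since `λ_j ^ μ_j = 1` the coefficient vanishes
unless `λ_j = 1` and `p ∤ μ_j`, so these relations cut out a space of dimension `2g + s - ℓ`.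
The surface relation is one more linear form on it, nonzero because `ρ ≠ 1`: its coefficients
at `x_i`, `y_i` are `1 - ρ(y_i)`, `ρ(x_i) - 1`, and at `γ_j` a unit. So `dim Z¹ = 2g + s - ℓ - 1`,
while `B¹ ≅ K` because `ρ` has no invariants.
-/

@[simp] lemma commutatorElement_eq_one_of_comm {A : Type*} [CommGroup A] (a b : A) : ⁅a, b⁆ = 1 :=
  commutatorElement_eq_one_iff_mul_comm.2 (mul_comm a b)

lemma Submodule.finrank_inf_ker_add_one {K V : Type*} [Field K] [AddCommGroup V] [Module K V]
    (W : Submodule K V) [FiniteDimensional K W] {φ : V →ₗ[K] K} (h : ∃ v ∈ W, φ v ≠ 0) :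
    Module.finrank K ↥(W ⊓ LinearMap.ker φ) + 1 = Module.finrank K W := by
  have hψ : φ.domRestrict W ≠ 0 := by
    obtain ⟨v, hv, hφv⟩ := h
    exact fun h0 => hφv (LinearMap.congr_fun h0 ⟨v, hv⟩)
  rw [← Module.Dual.finrank_ker_add_one_of_ne_zero hψ, LinearMap.ker_domRestrict,
    ← (Submodule.comapSubtypeEquivOfLe (inf_le_left : W ⊓ LinearMap.ker φ ≤ W)).finrank_eq,
    Submodule.comap_inf, Submodule.comap_subtype_self, top_inf_eq]

lemma geom_sum_eq_zero_iff_of_pow_eq_one {K : Type*} [Field K] {x : K} {n : ℕ} (h : x ^ n = 1) :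
    ∑ t ∈ Finset.range n, x ^ t = 0 ↔ (x = 1 → (n : K) = 0) := by
  by_cases hx : x = 1
  · simp [hx]
  · simp [geom_sum_eq hx, h, hx]

-- `⟨a, u⟩` is the affine map `x ↦ u * x + a`; multiplication is composition.
structure Aff (K : Type*) [CommRing K] where
  a : K
  u : Kˣ

namespace Aff

variable {K : Type*} [CommRing K]

@[ext] lemma ext {p q : Aff K} (ha : p.a = q.a) (hu : p.u = q.u) : p = q := by
  cases p; cases q; simp_all

instance : Mul (Aff K) := ⟨fun p q => ⟨p.a + p.u * q.a, p.u * q.u⟩⟩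
instance : One (Aff K) := ⟨⟨0, 1⟩⟩
instance : Inv (Aff K) := ⟨fun p => ⟨-(↑p.u⁻¹ * p.a), p.u⁻¹⟩⟩

@[simp] lemma mul_a (p q : Aff K) : (p * q).a = p.a + p.u * q.a := rfl
@[simp] lemma mul_u (p q : Aff K) : (p * q).u = p.u * q.u := rfl
@[simp] lemma one_a : (1 : Aff K).a = 0 := rfl
@[simp] lemma one_u : (1 : Aff K).u = 1 := rfl
@[simp] lemma inv_a (p : Aff K) : p⁻¹.a = -(↑p.u⁻¹ * p.a) := rfl
@[simp] lemma inv_u (p : Aff K) : p⁻¹.u = p.u⁻¹ := rfl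

instance : Group (Aff K) where
  mul_assoc p q r := by ext <;> simp only [mul_a, mul_u, Units.val_mul] <;> ring
  one_mul p := by ext <;> simp
  mul_one p := by ext <;> simp
  inv_mul_cancel p := by ext <;> simp

def linearPart : Aff K →* Kˣ where
  toFun p := p.u
  map_one' := rfl
  map_mul' _ _ := rfl

@[simp] lemma linearPart_apply (p : Aff K) : linearPart p = p.u := rfl

end Aff

namespace FreeGroup

variable {K : Type*} [CommRing K] {ι : Type*} (r : ι → Kˣ)

def foxHom (v : ι → K) : FreeGroup ι →* Aff K := lift fun k => ⟨v k, r k⟩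

@[simp] lemma foxHom_of (v : ι → K) (k : ι) : foxHom r v (of k) = ⟨v k, r k⟩ := lift_apply_of

lemma foxHom_u (v : ι → K) (w : FreeGroup ι) : (foxHom r v w).u = lift r w := by
  rw [← Aff.linearPart_apply, ← MonoidHom.comp_apply]
  exact lift_unique _ fun _ => by simp

-- `fox r w v = ∑ k, (∂w/∂k)(r) * v k`, with `∂/∂k` the Fox derivatives evaluated along `r`.
def fox (w : FreeGroup ι) (v : ι → K) : K := (foxHom r v w).a

@[simp] lemma fox_one (v : ι → K) : fox r 1 v = 0 := by simp [fox]

@[simp] lemma fox_of (k : ι) (v : ι → K) : fox r (of k) v = v k := by simp [fox]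

lemma fox_mul (w w' : FreeGroup ι) (v : ι → K) :
    fox r (w * w') v = fox r w v + lift r w * fox r w' v := by
  simp [fox, foxHom_u]

lemma fox_inv (w : FreeGroup ι) (v : ι → K) : fox r w⁻¹ v = -(↑(lift r w)⁻¹ * fox r w v) := by
  simp [fox, foxHom_u]

lemma fox_add (w : FreeGroup ι) (v v' : ι → K) : fox r w (v + v') = fox r w v + fox r w v' := by
  induction w using FreeGroup.induction_on with
  | C1 => simp
  | of k => simp
  | inv_of k _ => simp only [fox_inv, fox_of, Pi.add_apply]; ring
  | mul x y hx hy => simp only [fox_mul, hx, hy]; ring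

lemma fox_smul (w : FreeGroup ι) (c : K) (v : ι → K) : fox r w (c • v) = c * fox r w v := by
  induction w using FreeGroup.induction_on with
  | C1 => simp
  | of k => simp
  | inv_of k _ => simp only [fox_inv, fox_of, Pi.smul_apply, smul_eq_mul]; ring
  | mul x y hx hy => simp only [fox_mul, hx, hy]; ring

def foxLin (w : FreeGroup ι) : (ι → K) →ₗ[K] K where
  toFun := fox r w
  map_add' := fox_add r w
  map_smul' := fox_smul r w

@[simp] lemma foxLin_apply (w : FreeGroup ι) (v : ι → K) : foxLin r w v = fox r w v := rfl

@[simp] lemma fox_zero (w : FreeGroup ι) : fox r w (0 : ι → K) = 0 := map_zero (foxLin r w)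

def foxRelSpace (rels : Set (FreeGroup ι)) : Submodule K (ι → K) :=
  ⨅ w ∈ rels, LinearMap.ker (foxLin r w)

variable {r} in
lemma mem_foxRelSpace {rels : Set (FreeGroup ι)} {v : ι → K} :
    v ∈ foxRelSpace r rels ↔ ∀ w ∈ rels, fox r w v = 0 := by
  simp [foxRelSpace]

lemma fox_pow (w : FreeGroup ι) (n : ℕ) (v : ι → K) :
    fox r (w ^ n) v = (∑ t ∈ Finset.range n, (lift r w : K) ^ t) * fox r w v := by
  induction n with
  | zero => simp
  | succ n ih =>
    rw [pow_succ, fox_mul, ih, Finset.sum_range_succ, map_pow, Units.val_pow_eq_pow_val]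
    ring

lemma fox_commutatorElement (x y : FreeGroup ι) (v : ι → K) :
    fox r ⁅x, y⁆ v = (1 - lift r y) * fox r x v + (lift r x - 1) * fox r y v := by
  have hx := (lift r x).mul_inv
  have hy := (lift r y).mul_inv
  simp only [commutatorElement_def, fox_mul, fox_inv, MonoidHom.map_mul, MonoidHom.map_inv,
    Units.val_mul]
  linear_combination (-(lift r y : K) * fox r x v - fox r y v * lift r y * ↑(lift r y)⁻¹) * hx -
    fox r y v * hy

lemma fox_list_prod_of_lift_eq_one (L : List (FreeGroup ι)) (hL : ∀ w ∈ L, lift r w = 1)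
    (v : ι → K) : fox r L.prod v = (L.map (fox r · v)).sum := by
  induction L with
  | nil => simp
  | cons w L ih =>
    rw [List.prod_cons, fox_mul, hL w List.mem_cons_self,
      ih fun w' hw' => hL w' (List.mem_cons_of_mem w hw')]
    simp

variable [DecidableEq ι]

lemma fox_prod_map_of_single_of_notMem {L : List ι} {k : ι} (hk : k ∉ L) :
    fox r (L.map of).prod (Pi.single k 1) = 0 := by
  induction L with
  | nil => simp
  | cons x L ih =>
    rw [List.mem_cons, not_or] at hk
    rw [List.map_cons, List.prod_cons, fox_mul, fox_of, ih hk.2, Pi.single_eq_of_ne' hk.1]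
    simp

lemma isUnit_fox_prod_map_of_single {L : List ι} (hL : L.Nodup) {k : ι} (hk : k ∈ L) :
    IsUnit (fox r (L.map of).prod (Pi.single k 1)) := by
  induction L with
  | nil => simp at hk
  | cons x L ih =>
    rw [List.nodup_cons] at hL
    rw [List.map_cons, List.prod_cons, fox_mul, fox_of]
    by_cases hx : x = k
    · subst hx
      simp [fox_prod_map_of_single_of_notMem r hL.1]
    · have hkL : k ∈ L := (List.mem_cons.1 hk).resolve_left (Ne.symm hx)
      rw [Pi.single_eq_of_ne hx, zero_add]
      exact (lift r (of x)).isUnit.mul (ih hL.2 hkL)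

end FreeGroup

namespace groupCohomology

section Character

variable {K : Type} [CommRing K] {G : Type} [Group G] (ρ : G →* Kˣ)

lemma charRep_apply (γ : G) (x : K) : charRep ρ γ x = ρ γ * x := by
  simp [charRep]

lemma mem_cocycles₁_charRep_iff (f : G → K) :
    f ∈ cocycles₁ (Rep.of (charRep ρ)) ↔ ∀ γ δ : G, f (γ * δ) = ρ γ * f δ + f γ := by
  simp only [mem_cocycles₁_iff, charRep_apply]

def cocycles₁.toAff (f : cocycles₁ (Rep.of (charRep ρ))) : G →* Aff K where
  toFun γ := ⟨f γ, ρ γ⟩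
  map_one' := by ext <;> simp
  map_mul' γ δ := by
    ext
    · simp [(mem_cocycles₁_charRep_iff ρ f).1 f.2 γ δ, add_comm]
    · simp

def cocycles₁OfAff (φ : G →* Aff K) (hφ : Aff.linearPart.comp φ = ρ) :
    cocycles₁ (Rep.of (charRep ρ)) :=
  ⟨fun γ => (φ γ).a, (mem_cocycles₁_charRep_iff ρ _).2 fun γ δ => by
    rw [map_mul, Aff.mul_a, ← Aff.linearPart_apply, ← MonoidHom.comp_apply, hφ, add_comm]⟩

end Character

lemma finrank_coboundaries₁_charRep {K G : Type} [Field K] [Group G] {ρ : G →* Kˣ}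
    (hρ : ρ ≠ 1) :
    Module.finrank K (coboundaries₁ (Rep.of (charRep ρ))) = 1 := by
  have hinj : Function.Injective (d₀₁ (Rep.of (charRep ρ))).hom := by
    rw [← LinearMap.ker_eq_bot, d₀₁_ker_eq_invariants, Submodule.eq_bot_iff]
    intro x hx
    by_contra hx0
    refine hρ (MonoidHom.ext fun γ => Units.ext ?_)
    have := hx γ
    rw [Rep.of_ρ, charRep_apply] at this
    exact mul_right_cancel₀ hx0 (this.trans (one_mul _).symm)
  exact (LinearMap.finrank_range_of_inj hinj).trans (Module.finrank_self K)

lemma finrank_H1_add_finrank_coboundaries₁ {K G : Type} [Field K] [Group G] (A : Rep K G)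
    [FiniteDimensional K (cocycles₁ A)] :
    Module.finrank K (H1 A) + Module.finrank K (coboundaries₁ A) =
      Module.finrank K (cocycles₁ A) := by
  have hsurj : Function.Surjective (H1π A).hom :=
    (ModuleCat.epi_iff_surjective _).1 inferInstance
  have hker : LinearMap.ker (H1π A).hom =
      Submodule.comap (cocycles₁ A).subtype (coboundaries₁ A) := by
    ext x
    exact H1π_eq_zero_iff x
  rw [← LinearMap.finrank_range_add_finrank_ker (H1π A).hom, LinearMap.range_eq_top.2 hsurj,
    finrank_top, hker, (Submodule.comapSubtypeEquivOfLe (coboundaries₁_le_cocycles₁ A)).finrank_eq]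

end groupCohomology

namespace PresentedGroup

open FreeGroup groupCohomology

variable {ι : Type} {rels : Set (FreeGroup ι)}

section CommRing

variable {K : Type} [CommRing K] (ρ : PresentedGroup rels →* Kˣ)

lemma lift_comp_of (w : FreeGroup ι) : lift (ρ ∘ of) w = ρ (mk rels w) :=
  (lift_unique (ρ.comp (mk rels)) fun _ => rfl).symm

lemma cocycles₁_apply_mk (f : cocycles₁ (Rep.of (charRep ρ))) (w : FreeGroup ι) :
    f (mk rels w) = fox (ρ ∘ of) w (f ∘ of) := by
  have h : (cocycles₁.toAff ρ f).comp (mk rels) = foxHom (ρ ∘ of) (f ∘ of) :=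
    FreeGroup.ext_hom _ _ fun k => by rw [foxHom_of]; rfl
  exact congrArg Aff.a (DFunLike.congr_fun h w)

def restrictGen : cocycles₁ (Rep.of (charRep ρ)) →ₗ[K] ι → K :=
  LinearMap.funLeft K K of ∘ₗ (cocycles₁ _).subtype

@[simp] lemma restrictGen_apply (f : cocycles₁ (Rep.of (charRep ρ))) :
    restrictGen ρ f = f ∘ of := rfl

lemma restrictGen_injective : Function.Injective (restrictGen ρ) := by
  refine (injective_iff_map_eq_zero _).2 fun f hf => cocycles₁_ext fun γ => ?_
  obtain ⟨w, rfl⟩ := mk_surjective rels γ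
  rw [restrictGen_apply] at hf
  rw [cocycles₁_apply_mk, hf, fox_zero]
  rfl

lemma range_restrictGen : LinearMap.range (restrictGen ρ) = foxRelSpace (ρ ∘ of) rels := by
  ext v
  constructor
  · rintro ⟨f, rfl⟩
    refine mem_foxRelSpace.2 fun w hw => ?_
    rw [restrictGen_apply, ← cocycles₁_apply_mk, one_of_mem hw, cocycles₁_map_one]
  · intro hv
    have hrel : ∀ w ∈ rels, lift (fun k => (⟨v k, ρ (of k)⟩ : Aff K)) w = 1 := fun w hw => by
      change foxHom (ρ ∘ of) v w = 1
      ext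
      · exact mem_foxRelSpace.1 hv w hw
      · rw [foxHom_u, lift_comp_of, one_of_mem hw, _root_.map_one, Aff.one_u]
    have hlin : Aff.linearPart.comp (toGroup hrel) = ρ := ext fun k => by
      simp [toGroup.of]
    refine ⟨cocycles₁OfAff ρ (toGroup hrel) hlin, funext fun k => ?_⟩
    change (toGroup hrel (of k)).a = v k
    rw [toGroup.of]

end CommRing

variable {K : Type} [Field K] (ρ : PresentedGroup rels →* Kˣ)

instance [Finite ι] : FiniteDimensional K (cocycles₁ (Rep.of (charRep ρ))) :=
  Module.Finite.of_injective _ (restrictGen_injective ρ)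

lemma finrank_cocycles₁_eq_finrank_foxRelSpace :
    Module.finrank K (cocycles₁ (Rep.of (charRep ρ))) =
      Module.finrank K (foxRelSpace (ρ ∘ of) rels) := by
  rw [← range_restrictGen, LinearMap.finrank_range_of_inj (restrictGen_injective ρ)]

end PresentedGroup

namespace SurfOrbGroup

open FreeGroup groupCohomology

abbrev Gen (g s : ℕ) : Type := (Fin g ⊕ Fin g) ⊕ Fin s

section Words

variable {K : Type} [Field K] {g s : ℕ}

def commProd (g s : ℕ) : FreeGroup (Gen g s) :=
  (List.ofFn fun i : Fin g => ⁅of (Sum.inl (Sum.inl i) : Gen g s), of (Sum.inl (Sum.inr i))⁆).prod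

def coneProd (g s : ℕ) : FreeGroup (Gen g s) :=
  (List.ofFn fun j : Fin s => of (Sum.inr j : Gen g s)).prod

def surfWord (g s : ℕ) : FreeGroup (Gen g s) := commProd g s * coneProd g s

lemma lift_commProd {A : Type*} [CommGroup A] (r : Gen g s → A) : lift r (commProd g s) = 1 := by
  simp [commProd, map_list_prod, Function.comp_def]

lemma fox_commProd (r : Gen g s → Kˣ) (v : Gen g s → K) :
    fox r (commProd g s) v = ∑ i, ((1 - r (Sum.inl (Sum.inr i))) * v (Sum.inl (Sum.inl i)) +
      (r (Sum.inl (Sum.inl i)) - 1) * v (Sum.inl (Sum.inr i))) := by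
  rw [commProd, fox_list_prod_of_lift_eq_one, List.map_ofFn, List.sum_ofFn]
  · simp [fox_commutatorElement]
  · simp [List.mem_ofFn]

lemma coneProd_eq_prod_map_of : coneProd g s = ((List.ofFn Sum.inr).map of).prod := by
  rw [List.map_ofFn]
  rfl

lemma fox_surfWord (r : Gen g s → Kˣ) (v : Gen g s → K) :
    fox r (surfWord g s) v = fox r (commProd g s) v + fox r (coneProd g s) v := by
  rw [surfWord, fox_mul, lift_commProd, Units.val_one, one_mul]

lemma fox_surfWord_single_x (r : Gen g s → Kˣ) (i : Fin g) :
    fox r (surfWord g s) (Pi.single (Sum.inl (Sum.inl i)) 1) = 1 - r (Sum.inl (Sum.inr i)) := by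
  rw [fox_surfWord, coneProd_eq_prod_map_of,
    fox_prod_map_of_single_of_notMem r (by simp), add_zero, fox_commProd]
  simp [Pi.single_apply]

lemma fox_surfWord_single_y (r : Gen g s → Kˣ) (i : Fin g) :
    fox r (surfWord g s) (Pi.single (Sum.inl (Sum.inr i)) 1) = r (Sum.inl (Sum.inl i)) - 1 := by
  rw [fox_surfWord, coneProd_eq_prod_map_of,
    fox_prod_map_of_single_of_notMem r (by simp), add_zero, fox_commProd]
  simp [Pi.single_apply]

lemma isUnit_fox_surfWord_single_gamma (r : Gen g s → Kˣ) (j : Fin s) :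
    IsUnit (fox r (surfWord g s) (Pi.single (Sum.inr j) 1)) := by
  rw [fox_surfWord, fox_commProd, coneProd_eq_prod_map_of]
  simpa using isUnit_fox_prod_map_of_single r (List.nodup_ofFn.2 Sum.inr_injective) (by simp)

end Words

variable {K : Type} [Field K] {g s : ℕ} {μ : Fin s → ℕ} (ρ : SurfOrbGroup g s μ →* Kˣ)

def TameTrivial (j : Fin s) : Prop := ρ (surfGamma g s μ j) = 1 ∧ ¬ ringChar K ∣ μ j

def vanishingSpace : Submodule K (Gen g s → K) :=
  LinearMap.ker (LinearMap.funLeft K K fun j : {j // TameTrivial ρ j} => (Sum.inr j.1 : Gen g s))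

lemma mem_vanishingSpace {v : Gen g s → K} :
    v ∈ vanishingSpace ρ ↔ ∀ j, TameTrivial ρ j → v (Sum.inr j) = 0 := by
  simp [vanishingSpace, funext_iff]

lemma finrank_vanishingSpace :
    Module.finrank K (vanishingSpace ρ) + Nat.card {j // TameTrivial ρ j} = 2 * g + s := by
  classical
  have key := (LinearMap.funLeft K K
    fun j : {j // TameTrivial ρ j} => (Sum.inr j.1 : Gen g s)).finrank_range_add_finrank_ker
  rw [LinearMap.range_eq_top.2 (LinearMap.funLeft_surjective_of_injective K K _
    fun a b h => Subtype.ext (Sum.inr_injective h)), finrank_top] at key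
  rw [vanishingSpace, Nat.card_eq_fintype_card, ← Module.finrank_fintype_fun_eq_card K,
    add_comm, key]
  simp [two_mul]

lemma surfGamma_pow (j : Fin s) : surfGamma g s μ j ^ μ j = 1 :=
  (map_pow (PresentedGroup.mk _) _ _).symm.trans (PresentedGroup.one_of_mem (Or.inl ⟨j, rfl⟩))

lemma fox_gamma_pow_eq_zero_iff (v : Gen g s → K) (j : Fin s) :
    fox (ρ ∘ PresentedGroup.of) (of (Sum.inr j) ^ μ j) v = 0 ↔
      (TameTrivial ρ j → v (Sum.inr j) = 0) := by
  have hpow : (ρ (surfGamma g s μ j) : K) ^ μ j = 1 := by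
    rw [← Units.val_pow_eq_pow_val, ← map_pow, surfGamma_pow, _root_.map_one, Units.val_one]
  rw [fox_pow, fox_of, lift_apply_of, mul_eq_zero, Function.comp_apply,
    ← surfGamma, geom_sum_eq_zero_iff_of_pow_eq_one hpow, ringChar.spec, Units.val_eq_one,
    TameTrivial]
  tauto

lemma foxRelSpace_surfRels : foxRelSpace (ρ ∘ PresentedGroup.of) (surfRels g s μ) =
    vanishingSpace ρ ⊓ LinearMap.ker (foxLin (ρ ∘ PresentedGroup.of) (surfWord g s)) := by
  ext v
  simp only [mem_foxRelSpace, surfRels, Set.mem_union, Set.mem_range, Set.mem_singleton_iff,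
    or_imp, forall_and, forall_exists_index, forall_apply_eq_imp_iff, forall_eq,
    Submodule.mem_inf, mem_vanishingSpace, LinearMap.mem_ker, foxLin_apply]
  exact and_congr (forall_congr' fun j => fox_gamma_pow_eq_zero_iff ρ v j) Iff.rfl

lemma eq_one_of_fox_surfWord_eq_zero
    (h : ∀ v ∈ vanishingSpace ρ, fox (ρ ∘ PresentedGroup.of) (surfWord g s) v = 0) : ρ = 1 := by
  have single_mem : ∀ k, (∀ j, TameTrivial ρ j → Sum.inr j ≠ k) →
      Pi.single k 1 ∈ vanishingSpace ρ := fun k hk =>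
    (mem_vanishingSpace ρ).2 fun j hj => Pi.single_eq_of_ne (hk j hj) _
  refine PresentedGroup.ext ?_
  rintro ((i | i) | j)
  · have := h _ (single_mem (Sum.inl (Sum.inr i)) fun _ _ => Sum.inr_ne_inl)
    rw [fox_surfWord_single_y, sub_eq_zero] at this
    exact Units.ext this
  · have := h _ (single_mem (Sum.inl (Sum.inl i)) fun _ _ => Sum.inr_ne_inl)
    rw [fox_surfWord_single_x, sub_eq_zero] at this
    exact Units.ext this.symm
  · by_cases hj : TameTrivial ρ j
    · exact hj.1
    have := h _ (single_mem (Sum.inr j) fun j' hj' hjj' => hj (Sum.inr_injective hjj' ▸ hj'))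
    exact absurd this (isUnit_fox_surfWord_single_gamma _ j).ne_zero

end SurfOrbGroup

theorem stmt7_general (K : Type) [Field K] (g s : ℕ)
    (μ : Fin s → ℕ)
    (ρ : SurfOrbGroup g s μ →* Kˣ) (hρ : ρ ≠ 1) :
    Module.finrank K (groupCohomology.H1 (Rep.of (charRep ρ))) =
      2 * g + s - 2 -
        Nat.card {j : Fin s // ρ (surfGamma g s μ j) = 1 ∧ ¬ (ringChar K ∣ μ j)} := by
  have hφ : ∃ v ∈ SurfOrbGroup.vanishingSpace ρ,
      FreeGroup.foxLin (ρ ∘ PresentedGroup.of) (SurfOrbGroup.surfWord g s) v ≠ 0 := by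
    by_contra! h
    exact hρ (SurfOrbGroup.eq_one_of_fox_surfWord_eq_zero ρ h)
  have hH1 := groupCohomology.finrank_H1_add_finrank_coboundaries₁ (Rep.of (charRep ρ))
  have hZ1 := PresentedGroup.finrank_cocycles₁_eq_finrank_foxRelSpace ρ
  have hrel := Submodule.finrank_inf_ker_add_one (SurfOrbGroup.vanishingSpace ρ) hφ
  have hW := SurfOrbGroup.finrank_vanishingSpace ρ
  rw [groupCohomology.finrank_coboundaries₁_charRep hρ] at hH1
  rw [SurfOrbGroup.foxRelSpace_surfRels] at hZ1
  unfold SurfOrbGroup.TameTrivial at hW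
  rw [← hW, ← hrel, ← hZ1, ← hH1]
  omega

/-- let `K` be an algebraically closed field of characteristic `p ≥ 0`,
`g ≥ 1`, `s ≥ 0`, `μ_j ≥ 2`, `Γ` the compact-surface orbifold group above, and
`ρ : Γ → Kˣ` a nontrivial character.  With `ℓ = #{j | ρ(γ_j) = 1 and p ∤ μ_j}`, one
has `dim_K H¹(Γ, K_ρ) = 2g + s - 2 - ℓ`. -/
theorem stmt7 (K : Type) [Field K] [IsAlgClosed K] (g s : ℕ) (hg : 1 ≤ g)
    (μ : Fin s → ℕ) (hμ : ∀ j, 2 ≤ μ j)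
    (ρ : SurfOrbGroup g s μ →* Kˣ) (hρ : ρ ≠ 1) :
    Module.finrank K (groupCohomology.H1 (Rep.of (charRep ρ))) =
      2 * g + s - 2 -
        Nat.card {j : Fin s // ρ (surfGamma g s μ j) = 1 ∧ ¬ (ringChar K ∣ μ j)} :=
  stmt7_general K g s μ ρ hρ
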